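/- arXiv:1810.12203 — 3 statements merged into one kernel-verified Lean document; each statement's English description precedes it below -/
import Mathlib

section
/- Let O be a valuation ring in which every ideal can be generated by at most countably many elements. Then O has global dimension at most 2: every O-module M admits a projective resolution 0 → P₂ → P₁ → P₀ → M → 0 of length at most 2 (equivalently, every O-module has projective dimension ≤ 2). -/
set_option linter.unusedSectionVars false
set_option maxHeartbeats 1000000

universe u v

section Auxiliary
variable {O : Type u} [CommRing O] [IsDomain O] [ValuationRing O]


/-- In a valuation domain, a countably generated nonzero ideal is the increasing union
of principal ideals generated by a divisibility chain of nonzero elements. -/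
lemma exists_chain_gen (I : Ideal O) (hI : I ≠ ⊥)
    (hc : ∃ S : Set O, S.Countable ∧ Ideal.span S = I) :
    ∃ g r : ℕ → O, (∀ n, g n ≠ 0) ∧ (∀ n, g n ∈ I) ∧ (∀ n, g n = r n * g (n + 1)) ∧
      (∀ x ∈ I, ∃ n c, x = c * g n) := by
  classical
  obtain ⟨S, hScount, hSspan⟩ := hc
  obtain ⟨x₀, hx₀I, hx₀⟩ := Submodule.exists_mem_ne_zero_of_ne_bot hI
  set S' : Set O := insert x₀ S with hS'
  have hS'count : S'.Countable := hScount.insert x₀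
  have hS'span : Ideal.span S' = I := by
    rw [hS', Ideal.span_insert, hSspan]
    exact sup_eq_right.mpr ((Ideal.span_singleton_le_iff_mem I).mpr hx₀I)
  obtain ⟨s, hs⟩ := hS'count.exists_eq_range ⟨x₀, Set.mem_insert _ _⟩
  have hsI : ∀ n, s n ∈ I := fun n => by
    have : s n ∈ S' := hs ▸ Set.mem_range_self n
    exact hS'span ▸ Ideal.subset_span this
  -- define the chain
  let g : ℕ → O := fun n => Nat.rec x₀ (fun n gn => if h : ∃ c, s n = c * gn then gn else s n) n
  have hg0 : g 0 = x₀ := rfl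
  have hgsucc : ∀ n, g (n+1) = if h : ∃ c, s n = c * g n then g n else s n := fun n => rfl
  have hgI : ∀ n, g n ∈ I := by
    intro n; induction n with
    | zero => exact hx₀I
    | succ n ih => rw [hgsucc]; split <;> [exact ih; exact hsI n]
  have hgne : ∀ n, g n ≠ 0 := by
    intro n; induction n with
    | zero => exact hx₀
    | succ n ih =>
      rw [hgsucc]; split
      · exact ih
      · next h =>
          intro h0
          exact h ⟨0, by rw [h0, zero_mul]⟩
  have hdvd : ∀ n, ∃ r, g n = r * g (n + 1) := by
    intro n
    rw [hgsucc]; split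
    · exact ⟨1, (one_mul _).symm⟩
    · next h =>
        obtain ⟨c, hc⟩ := ValuationRing.cond (g n) (s n)
        rcases hc with hc | hc
        · exact absurd ⟨c, by rw [mul_comm, hc]⟩ h
        · exact ⟨c, by rw [mul_comm, hc]⟩
  have hsg : ∀ n, ∃ c, s n = c * g (n + 1) := by
    intro n
    rw [hgsucc]; split
    · next h => exact h
    · exact ⟨1, (one_mul _).symm⟩
  choose r hr using hdvd
  refine ⟨g, r, hgne, hgI, hr, ?_⟩
  intro x hx
  have hJ : I ≤ ⨆ n, Ideal.span {g n} := by
    rw [← hS'span, Ideal.span_le]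
    intro y hy
    rw [hs] at hy
    obtain ⟨n, rfl⟩ := hy
    obtain ⟨c, hc⟩ := hsg n
    exact Submodule.mem_iSup_of_mem (n+1) (Ideal.mem_span_singleton'.mpr ⟨c, hc.symm⟩)
  have hdir : Directed (· ≤ ·) (fun n => Ideal.span ({g n} : Set O)) := by
    have hmono : ∀ n, Ideal.span ({g n} : Set O) ≤ Ideal.span {g (n+1)} :=
      fun n => (Ideal.span_singleton_le_span_singleton).mpr ⟨r n, by rw [mul_comm]; exact (hr n)⟩
    have : Monotone (fun n => Ideal.span ({g n} : Set O)) :=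
      monotone_nat_of_le_succ hmono
    exact this.directed_le
  obtain ⟨n, hn⟩ := (Submodule.mem_iSup_of_directed _ hdir).mp (hJ hx)
  obtain ⟨c, hc⟩ := Ideal.mem_span_singleton'.mp hn
  exact ⟨n, c, hc.symm⟩

section Telescope
variable (r : ℕ → O)

/-- Telescope relation vectors. -/
noncomputable def tv : ℕ → (ℕ →₀ O) :=
  fun n => Finsupp.single n 1 - Finsupp.single (n + 1) (r n)

lemma tv_apply (n m : ℕ) :
    tv r n m = (if n = m then (1 : O) else 0) - (if m = n + 1 then r n else 0) := by
  classical
  simp [tv, Finsupp.single_apply, eq_comm]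

/-- Coordinate formula for a linear combination into a finsupp module. -/
lemma lc_coord {α β : Type*} (w : α → (β →₀ O)) (x : α →₀ O) (b : β) :
    (Finsupp.linearCombination O w x) b = x.sum fun a c => c * (w a b) := by
  classical
  simp [Finsupp.linearCombination_apply, Finsupp.sum_apply, Finsupp.smul_apply]

lemma psi_coord_zero (x : ℕ →₀ O) :
    (Finsupp.linearCombination O (tv r) x) 0 = x 0 := by
  classical
  rw [lc_coord]
  have : (x.sum fun n c => c * tv r n 0)
      = x.sum fun n c => if n = 0 then c else 0 := by
    apply Finsupp.sum_congr
    intro n _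
    rw [tv_apply]
    split <;> simp
  rw [this, Finsupp.sum_ite_eq']
  split
  · rfl
  · next h => exact (Finsupp.notMem_support_iff.mp h).symm

lemma psi_coord_succ (x : ℕ →₀ O) (m : ℕ) :
    (Finsupp.linearCombination O (tv r) x) (m + 1) = x (m + 1) - r m * x m := by
  classical
  rw [lc_coord]
  have : (x.sum fun n c => c * tv r n (m + 1))
      = x.sum fun n c => (if n = m + 1 then c else 0) - (if n = m then c * r m else 0) := by
    apply Finsupp.sum_congr
    intro n _
    rw [tv_apply, mul_sub]
    congr 1
    · split <;> simp
    · by_cases h : n = m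
      · subst h; simp
      · have : ¬ (m + 1 = n + 1) := by omega
        simp [h, this, Ne.symm h]
  rw [this, Finsupp.sum_sub, Finsupp.sum_ite_eq', Finsupp.sum_ite_eq']
  have e1 : (if m + 1 ∈ x.support then x (m+1) else 0) = x (m+1) := by
    split
    · rfl
    · next h => exact (Finsupp.notMem_support_iff.mp h).symm
  have e2 : (if m ∈ x.support then x m * r m else 0) = x m * r m := by
    split
    · rfl
    · next h => rw [Finsupp.notMem_support_iff.mp h, zero_mul]
  rw [e1, e2, mul_comm]

lemma psi_injective : Function.Injective (Finsupp.linearCombination O (tv r)) := by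
  classical
  rw [injective_iff_map_eq_zero]
  intro x hx
  ext m
  induction m with
  | zero =>
    have := psi_coord_zero r x
    rw [hx] at this
    simpa using this.symm
  | succ n ih =>
    have h2 := psi_coord_succ r x n
    rw [hx] at h2
    simp only [Finsupp.coe_zero, Pi.zero_apply] at h2 ih ⊢
    rw [ih, mul_zero, sub_zero] at h2
    exact h2.symm
end Telescope

section TelescopeKer

lemma psi_mem_ker {g r : ℕ → O} (hg : ∀ n, g n ≠ 0) (hgr : ∀ n, g n = r n * g (n + 1))
    (x : ℕ →₀ O)
    (hx : Finsupp.linearCombination O g x = 0) :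
    ∃ y : ℕ →₀ O, Finsupp.linearCombination O (tv r) y = x := by
  classical
  -- the recursive solution
  let Y : ℕ → O := fun n => Nat.rec (x 0) (fun n yn => x (n + 1) + r n * yn) n
  have hY0 : Y 0 = x 0 := rfl
  have hYsucc : ∀ n, Y (n + 1) = x (n + 1) + r n * Y n := fun n => rfl
  have hpartial : ∀ n, Y n * g n = ∑ k ∈ Finset.range (n + 1), x k * g k := by
    intro n
    induction n with
    | zero => simp [hY0]
    | succ n ih =>
      rw [Finset.sum_range_succ, ← ih, hYsucc n]
      have h2 : r n * Y n * g (n + 1) = Y n * g n := by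
        conv_rhs => rw [hgr n]
        ring
      linear_combination h2
  -- total sum over a range containing the support
  have hsum : ∀ n, (↑x.support : Set ℕ) ⊆ Set.Iio (n + 1) →
      Y n * g n = 0 := by
    intro n hsupp
    have h3 : Finsupp.linearCombination O g x = ∑ k ∈ Finset.range (n + 1), x k * g k := by
      rw [Finsupp.linearCombination_apply]
      rw [Finsupp.sum_of_support_subset x
        (fun k hk => Finset.mem_range.mpr (hsupp hk)) (fun i a => a • g i)
        (fun k _ => zero_smul O (g k))]
      simp [smul_eq_mul]
    rw [hpartial n, ← h3, hx]
  set N : ℕ := x.support.sup id with hN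
  have hsupp : ∀ n, N ≤ n → (↑x.support : Set ℕ) ⊆ Set.Iio (n + 1) := by
    intro n hn k hk
    have : k ≤ N := Finset.le_sup (f := id) hk
    exact Set.mem_Iio.mpr (by omega)
  have hYzero : ∀ n, N ≤ n → Y n = 0 := by
    intro n hn
    have := hsum n (hsupp n hn)
    rcases mul_eq_zero.mp this with h | h
    · exact h
    · exact absurd h (hg n)
  refine ⟨Finsupp.onFinset (Finset.range (N + 1)) Y ?_, ?_⟩
  · intro n hn
    rw [Finset.mem_range]
    by_contra hcon
    exact hn (hYzero n (by omega))
  · ext m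
    cases m with
    | zero => rw [psi_coord_zero, Finsupp.onFinset_apply]; exact hY0
    | succ m =>
      rw [psi_coord_succ]
      rw [Finsupp.onFinset_apply, Finsupp.onFinset_apply, hYsucc]
      ring
end TelescopeKer

/-- Every submodule of a free module over a valuation domain with countably generated ideals
admits a two-step free resolution. -/
lemma free_resolution_of_submodule
    (hcount : ∀ I : Ideal O, ∃ S : Set O, S.Countable ∧ Ideal.span S = I)
    {ι : Type v} [LinearOrder ι] [WellFoundedLT ι] (K : Submodule O (ι →₀ O)) :
    ∃ (X : Type v) (f₁ : (X →₀ O) →ₗ[O] (ι →₀ O)) (f₂ : (X →₀ O) →ₗ[O] (X →₀ O)),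
      LinearMap.range f₁ = K ∧ Function.Injective f₂ ∧
      LinearMap.range f₂ = LinearMap.ker f₁ := by
  classical
  -- the "layer" ideals
  set Iid : ι → Ideal O :=
    fun i => (K ⊓ Finsupp.supported O O (Set.Iic i)).map (Finsupp.lapply i) with hIid
  have hmem : ∀ (i : ι) (x : ι →₀ O), x ∈ K → (↑x.support : Set ι) ⊆ Set.Iic i →
      x i ∈ Iid i := by
    intro i x hx hs
    exact Submodule.mem_map.mpr ⟨x, Submodule.mem_inf.mpr
      ⟨hx, (Finsupp.mem_supported O x).mpr hs⟩, Finsupp.lapply_apply i x⟩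
  -- rows with nonzero layer ideal
  set ι' := {i : ι // Iid i ≠ ⊥} with hι'
  -- chain generators for each nonzero layer ideal
  have hchain : ∀ i : ι', ∃ g r : ℕ → O, (∀ n, g n ≠ 0) ∧ (∀ n, g n ∈ Iid ↑i) ∧
      (∀ n, g n = r n * g (n + 1)) ∧ (∀ x ∈ Iid ↑i, ∃ n c, x = c * g n) :=
    fun i => exists_chain_gen (Iid ↑i) i.2 (hcount _)
  choose g r hgne hgI hgr hgcover using hchain
  -- lifts of the chain generators
  have hw : ∀ (i : ι') (n : ℕ), ∃ x : ι →₀ O, x ∈ K ∧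
      (↑x.support : Set ι) ⊆ Set.Iic (↑i : ι) ∧ x (↑i : ι) = g i n := by
    intro i n
    obtain ⟨x, hx, hxi⟩ := Submodule.mem_map.mp (hgI i n)
    obtain ⟨hxK, hxs⟩ := Submodule.mem_inf.mp hx
    exact ⟨x, hxK, (Finsupp.mem_supported O x).mp hxs, hxi⟩
  choose w hwK hwsupp hwi using hw
  set X := ι' × ℕ with hX
  set W : X → (ι →₀ O) := fun p => w p.1 p.2 with hW
  set Φ : (X →₀ O) →ₗ[O] (ι →₀ O) := Finsupp.linearCombination O W with hΦ
  have hWK : ∀ p : X, W p ∈ K := fun p => hwK p.1 p.2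
  have hWcoord : ∀ (p : X) (j : ι), ¬ j ≤ (↑p.1 : ι) → W p j = 0 := by
    intro p j hj
    by_contra h
    exact hj (hwsupp p.1 p.2 (Finsupp.mem_support_iff.mpr h))
  have hWdiag : ∀ p : X, W p (↑p.1 : ι) = g p.1 p.2 := fun p => hwi p.1 p.2
  have hrange_le : LinearMap.range Φ ≤ K := by
    rw [hΦ, Finsupp.range_linearCombination, Submodule.span_le]
    rintro _ ⟨p, rfl⟩
    exact hWK p
  -- the lifting lemma, by well-founded induction on the top coordinate
  have hlift : ∀ i : ι, ∀ x ∈ K, (↑x.support : Set ι) ⊆ Set.Iic i →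
      ∃ z : X →₀ O, Φ z = x ∧ ∀ p ∈ z.support, ((↑p.1 : ι) ≤ i) := by
    intro i
    induction i using WellFoundedLT.induction with
    | _ i IH =>
    intro x hxK hxs
    by_cases hx0 : x = 0
    · exact ⟨0, by simp [hx0], by simp⟩
    have hne : x.support.Nonempty := Finsupp.support_nonempty_iff.mpr hx0
    set m : ι := x.support.max' hne with hm
    have hmmem : m ∈ x.support := x.support.max'_mem hne
    have hmle : ∀ j ∈ x.support, j ≤ m := fun j hj => x.support.le_max' j hj
    have hmi : m ≤ i := hxs hmmem
    have hxm : x m ≠ 0 := Finsupp.mem_support_iff.mp hmmem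
    have hxsm : (↑x.support : Set ι) ⊆ Set.Iic m := fun j hj => hmle j hj
    have hxmI : x m ∈ Iid m := hmem m x hxK hxsm
    have hbot : Iid m ≠ ⊥ := by
      intro h
      rw [h, Submodule.mem_bot] at hxmI
      exact hxm hxmI
    obtain ⟨n, c, hc⟩ := hgcover ⟨m, hbot⟩ (x m) hxmI
    set p₀ : X := (⟨m, hbot⟩, n) with hp₀
    set x' := x - c • W p₀ with hx'
    have hx'K : x' ∈ K := K.sub_mem hxK (K.smul_mem c (hWK p₀))
    have hx'supp : (↑x'.support : Set ι) ⊆ Set.Iio m := by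
      intro j hj
      have hj' : x' j ≠ 0 := Finsupp.mem_support_iff.mp hj
      rcases lt_trichotomy j m with h | h | h
      · exact h
      · exfalso
        apply hj'
        rw [hx', Finsupp.sub_apply, Finsupp.smul_apply, h, hWdiag p₀, smul_eq_mul, ← hc,
          sub_self]
      · exfalso
        apply hj'
        have h1 : x j = 0 := by
          by_contra hcon
          exact absurd (hxsm (Finsupp.mem_support_iff.mpr hcon)) (not_le.mpr h)
        have h2 : W p₀ j = 0 := hWcoord p₀ j (not_le.mpr h)
        rw [hx', Finsupp.sub_apply, Finsupp.smul_apply, h1, h2, smul_zero, sub_zero]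
    have hΦsingle : Φ (Finsupp.single p₀ c) = c • W p₀ := by
      rw [hΦ, Finsupp.linearCombination_single]
    by_cases hx'0 : x' = 0
    · refine ⟨Finsupp.single p₀ c, ?_, ?_⟩
      · rw [hΦsingle]
        have := sub_eq_zero.mp (hx' ▸ hx'0)
        exact this.symm ▸ rfl
      · intro p hp
        have := Finsupp.support_single_subset hp
        rw [Finset.mem_singleton] at this
        subst this
        exact hmi
    · have hne' : x'.support.Nonempty := Finsupp.support_nonempty_iff.mpr hx'0
      set m₂ : ι := x'.support.max' hne' with hm₂
      have hm₂m : m₂ < m := hx'supp (x'.support.max'_mem hne')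
      have hm₂i : m₂ < i := lt_of_lt_of_le hm₂m hmi
      have hx's : (↑x'.support : Set ι) ⊆ Set.Iic m₂ :=
        fun j hj => x'.support.le_max' j hj
      obtain ⟨z', hz'Φ, hz's⟩ := IH m₂ hm₂i x' hx'K hx's
      refine ⟨Finsupp.single p₀ c + z', ?_, ?_⟩
      · rw [map_add, hΦsingle, hz'Φ, hx']
        abel
      · intro p hp
        rcases Finset.mem_union.mp (Finsupp.support_add hp) with h | h
        · have := Finsupp.support_single_subset h
          rw [Finset.mem_singleton] at this
          subst this
          exact hmi
        · exact le_of_lt (lt_of_le_of_lt (hz's p h) hm₂i)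
  -- strict lifting
  have hliftlt : ∀ i : ι, ∀ x ∈ K, (↑x.support : Set ι) ⊆ Set.Iio i →
      ∃ z : X →₀ O, Φ z = x ∧ ∀ p ∈ z.support, ((↑p.1 : ι) < i) := by
    intro i x hxK hxs
    by_cases hx0 : x = 0
    · exact ⟨0, by simp [hx0], by simp⟩
    have hne : x.support.Nonempty := Finsupp.support_nonempty_iff.mpr hx0
    set m : ι := x.support.max' hne with hm
    have hmi : m < i := hxs (x.support.max'_mem hne)
    obtain ⟨z, hzΦ, hzs⟩ := hlift m x hxK (fun j hj => x.support.le_max' j hj)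
    exact ⟨z, hzΦ, fun p hp => lt_of_le_of_lt (hzs p hp) hmi⟩
  -- surjectivity of Φ onto K
  have hKle : K ≤ LinearMap.range Φ := by
    intro x hxK
    by_cases hx0 : x = 0
    · rw [hx0]; exact Submodule.zero_mem _
    have hne : x.support.Nonempty := Finsupp.support_nonempty_iff.mpr hx0
    obtain ⟨z, hzΦ, -⟩ := hlift (x.support.max' hne) x hxK
      (fun j hj => x.support.le_max' j hj)
    exact ⟨z, hzΦ⟩
  -- relations: lifts of the telescope relations
  have hzex : ∀ (i : ι') (n : ℕ), ∃ z : X →₀ O,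
      Φ z = W (i, n) - r i n • W (i, n + 1) ∧ ∀ p ∈ z.support, ((↑p.1 : ι) < ↑i) := by
    intro i n
    set t := W (i, n) - r i n • W (i, n + 1) with ht
    have htK : t ∈ K := K.sub_mem (hWK _) (K.smul_mem _ (hWK _))
    have hts : (↑t.support : Set ι) ⊆ Set.Iio ↑i := by
      intro j hj
      have hj' : t j ≠ 0 := Finsupp.mem_support_iff.mp hj
      rcases lt_trichotomy j (↑i : ι) with h | h | h
      · exact h
      · exfalso
        apply hj'
        rw [ht, Finsupp.sub_apply, Finsupp.smul_apply, h, hWdiag (i, n), hWdiag (i, n+1),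
          smul_eq_mul, ← hgr i n, sub_self]
      · exfalso
        apply hj'
        rw [ht, Finsupp.sub_apply, Finsupp.smul_apply, hWcoord (i, n) j (not_le.mpr h),
          hWcoord (i, n+1) j (not_le.mpr h), smul_zero, sub_zero]
    exact hliftlt ↑i t htK hts
  choose z hzΦ hzs using hzex
  set U : X → (X →₀ O) :=
    fun p => Finsupp.single p 1 - Finsupp.single (p.1, p.2 + 1) (r p.1 p.2) - z p.1 p.2
    with hU
  set Ψ : (X →₀ O) →ₗ[O] (X →₀ O) := Finsupp.linearCombination O U with hΨ
  -- Φ kills each U p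
  have hΦU : ∀ p : X, Φ (U p) = 0 := by
    intro p
    rw [hU]
    simp only [map_sub, hΦ, Finsupp.linearCombination_single]
    rw [← hΦ, hzΦ p.1 p.2, one_smul]
    have : (p.1, p.2) = p := rfl
    rw [this]
    abel
  -- hence Φ ∘ Ψ = 0
  have hΦΨ : ∀ t : X →₀ O, Φ (Ψ t) = 0 := by
    intro t
    have h1 : Ψ t = t.sum fun p c => c • U p := by
      rw [hΨ, Finsupp.linearCombination_apply]
    rw [h1, map_finsuppSum, Finsupp.sum]
    apply Finset.sum_eq_zero
    intro p hp
    rw [map_smul, hΦU p, smul_zero]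
  -- coordinates of U
  have hUlt : ∀ (q p : X), ¬ ((↑p.1 : ι) ≤ (↑q.1 : ι)) → U q p = 0 := by
    intro q p hqp
    have h1 : (Finsupp.single q 1 : X →₀ O) p = 0 := by
      rw [Finsupp.single_apply]
      split
      · next hq =>
          exfalso
          apply hqp
          rw [← hq]
      · rfl
    have h2 : (Finsupp.single (q.1, q.2 + 1) (r q.1 q.2) : X →₀ O) p = 0 := by
      rw [Finsupp.single_apply]
      split
      · next hq =>
          exfalso
          apply hqp
          rw [← hq]
      · rfl
    have h3 : z q.1 q.2 p = 0 := by
      by_contra h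
      exact hqp (le_of_lt (hzs q.1 q.2 p (Finsupp.mem_support_iff.mpr h)))
    rw [hU]
    simp only [Finsupp.sub_apply, h1, h2, h3, sub_zero, zero_sub, neg_zero]
  have hUeq : ∀ (i : ι') (n m : ℕ), U (i, n) (i, m) = tv (r i) n m := by
    intro i n m
    have h3 : z i n (i, m) = 0 := by
      by_contra h
      exact absurd (hzs i n (i, m) (Finsupp.mem_support_iff.mpr h)) (lt_irrefl _)
    have h1 : (Finsupp.single ((i, n) : X) 1 : X →₀ O) (i, m) = (if n = m then (1:O) else 0) := by
      rw [Finsupp.single_apply]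
      congr 1
      exact propext ⟨fun h => (Prod.ext_iff.mp h).2, fun h => by rw [h]⟩
    have h2 : (Finsupp.single ((i, n + 1) : X) (r i n) : X →₀ O) (i, m)
        = (if m = n + 1 then r i n else 0) := by
      rw [Finsupp.single_apply]
      congr 1
      exact propext ⟨fun h => ((Prod.ext_iff.mp h).2).symm, fun h => by rw [h]⟩
    rw [hU]
    simp only [Finsupp.sub_apply]
    rw [h1, h2, h3, sub_zero, tv_apply]
  -- the row-extraction lemma
  have key : ∀ (i : ι') (y : X →₀ O), (∀ p ∈ y.support, ((↑p.1 : ι) ≤ ↑i)) →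
      ∃ Y : ℕ →₀ O, (∀ n, Y n = y (i, n)) ∧
        (Φ y) ↑i = Finsupp.linearCombination O (g i) Y ∧
        (∀ m, (Ψ y) (i, m) = Finsupp.linearCombination O (tv (r i)) Y m) := by
    intro i y hrows
    set emb : ℕ ↪ X := ⟨fun n => (i, n), fun a b h => (Prod.ext_iff.mp h).2⟩ with hemb
    set Y : ℕ →₀ O := Finsupp.onFinset (y.support.image Prod.snd) (fun n => y (i, n))
      (fun n hn => Finset.mem_image.mpr ⟨(i, n), Finsupp.mem_support_iff.mpr hn, rfl⟩)
      with hY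
    have hYn : ∀ n, Y n = y (i, n) := fun n => Finsupp.onFinset_apply
    -- the filter decomposition
    have hsplit : y = Finsupp.filter (fun p : X => p.1 = i) y
        + Finsupp.filter (fun p : X => ¬ p.1 = i) y :=
      (Finsupp.filter_pos_add_filter_neg y _).symm
    have hyt : Finsupp.embDomain emb Y = Finsupp.filter (fun p : X => p.1 = i) y := by
      ext p
      obtain ⟨pi, pn⟩ := p
      by_cases hpi : pi = i
      · rw [Finsupp.filter_apply_pos (fun p : X => p.1 = i) y hpi]
        have h1 : ((pi, pn) : X) = emb pn :=
          (congrArg (fun t : ι' => ((t, pn) : X)) hpi).trans rfl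
        rw [h1, Finsupp.embDomain_apply_self, hYn pn]
        rfl
      · have h1 : ((pi, pn) : X) ∉ Set.range ⇑emb := by
          rintro ⟨n, hn⟩
          exact hpi (congrArg Prod.fst hn).symm
        rw [Finsupp.embDomain_notin_range emb Y _ h1,
          Finsupp.filter_apply_neg (fun p : X => p.1 = i) y hpi]
    -- rows strictly below i contribute nothing at row i
    have hneg_suppΦ : (Φ (Finsupp.filter (fun p : X => ¬ p.1 = i) y)) ↑i = 0 := by
      rw [hΦ, lc_coord, Finsupp.sum]
      apply Finset.sum_eq_zero
      intro p hp
      rw [Finsupp.support_filter, Finset.mem_filter] at hp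
      have hlt : (↑p.1 : ι) < ↑i :=
        lt_of_le_of_ne (hrows p hp.1) (fun hcon => hp.2 (Subtype.ext hcon))
      rw [hWcoord p ↑i (not_le.mpr hlt), mul_zero]
    have hneg_suppΨ : ∀ m, (Ψ (Finsupp.filter (fun p : X => ¬ p.1 = i) y)) (i, m) = 0 := by
      intro m
      rw [hΨ, lc_coord, Finsupp.sum]
      apply Finset.sum_eq_zero
      intro p hp
      rw [Finsupp.support_filter, Finset.mem_filter] at hp
      have hlt : (↑p.1 : ι) < ↑i :=
        lt_of_le_of_ne (hrows p hp.1) (fun hcon => hp.2 (Subtype.ext hcon))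
      rw [hUlt p ((i, m) : X) (not_le.mpr hlt), mul_zero]
    refine ⟨Y, hYn, ?_, ?_⟩
    · conv_lhs => rw [hsplit]
      rw [map_add, Finsupp.add_apply, hneg_suppΦ, add_zero, ← hyt, hΦ,
        Finsupp.linearCombination_embDomain, lc_coord, Finsupp.linearCombination_apply]
      apply Finsupp.sum_congr
      intro n _
      rw [smul_eq_mul]
      congr 1
      exact hWdiag ((i, n) : X)
    · intro m
      conv_lhs => rw [hsplit]
      rw [map_add, Finsupp.add_apply, hneg_suppΨ, add_zero, ← hyt, hΨ,
        Finsupp.linearCombination_embDomain, lc_coord]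
      have hrhs : Finsupp.linearCombination O (tv (r i)) Y m
          = Y.sum fun n c => c * tv (r i) n m := lc_coord _ _ _
      rw [hrhs]
      apply Finsupp.sum_congr
      intro n _
      congr 1
      exact hUeq i n m
  -- injectivity of Ψ
  have hΨinj : Function.Injective Ψ := by
    rw [injective_iff_map_eq_zero]
    intro t ht
    by_contra ht0
    have hne : t.support.Nonempty := Finsupp.support_nonempty_iff.mpr ht0
    have hSne : (t.support.image Prod.fst).Nonempty := hne.image _
    set i₀ : ι' := (t.support.image Prod.fst).max' hSne with hi₀
    have hrows : ∀ p ∈ t.support, ((↑p.1 : ι) ≤ ↑i₀) := by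
      intro p hp
      exact Subtype.coe_le_coe.mpr ((t.support.image Prod.fst).le_max'
        p.1 (Finset.mem_image.mpr ⟨p, hp, rfl⟩))
    obtain ⟨Y, hYn, -, hΨrow⟩ := key i₀ t hrows
    have hY0 : Y = 0 := by
      apply psi_injective (r i₀)
      ext m
      rw [← hΨrow m, ht]
      rfl
    obtain ⟨p, hp, hpfst⟩ := Finset.mem_image.mp ((t.support.image Prod.fst).max'_mem hSne)
    rw [← hi₀] at hpfst
    have : t p ≠ 0 := Finsupp.mem_support_iff.mp hp
    apply this
    have hpe : p = ((i₀, p.2) : X) := by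
      rw [← hpfst]
    rw [hpe, ← hYn p.2, hY0]
    rfl
  -- the kernel of Φ is contained in the range of Ψ
  have hkerle : ∀ y : X →₀ O, Φ y = 0 → y ∈ LinearMap.range Ψ := by
    have main : ∀ i : ι, ∀ y : X →₀ O, Φ y = 0 → (∀ p ∈ y.support, ((↑p.1 : ι) ≤ i)) →
        y ∈ LinearMap.range Ψ := by
      intro i
      induction i using WellFoundedLT.induction with
      | _ i IH =>
      intro y hyΦ hrows
      by_cases hy0 : y = 0
      · rw [hy0]; exact Submodule.zero_mem _
      have hne : y.support.Nonempty := Finsupp.support_nonempty_iff.mpr hy0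
      have hSne : (y.support.image Prod.fst).Nonempty := hne.image _
      set i₀ : ι' := (y.support.image Prod.fst).max' hSne with hi₀
      have hrows₀ : ∀ p ∈ y.support, ((↑p.1 : ι) ≤ ↑i₀) := by
        intro p hp
        exact Subtype.coe_le_coe.mpr ((y.support.image Prod.fst).le_max'
          p.1 (Finset.mem_image.mpr ⟨p, hp, rfl⟩))
      have hi₀i : (↑i₀ : ι) ≤ i := by
        obtain ⟨p, hp, hpfst⟩ := Finset.mem_image.mp ((y.support.image Prod.fst).max'_mem hSne)
        rw [← hi₀] at hpfst
        rw [← hpfst]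
        exact hrows p hp
      obtain ⟨Y, hYn, hΦrow, -⟩ := key i₀ y hrows₀
      have hYker : Finsupp.linearCombination O (g i₀) Y = 0 := by
        rw [← hΦrow, hyΦ]
        rfl
      obtain ⟨y', hy'⟩ := psi_mem_ker (hgne i₀) (hgr i₀) Y hYker
      set emb : ℕ ↪ X := ⟨fun n => (i₀, n), fun a b h => (Prod.ext_iff.mp h).2⟩ with hemb
      set y'' : X →₀ O := Finsupp.embDomain emb y' with hy''
      have hrows'' : ∀ p ∈ y''.support, ((↑p.1 : ι) ≤ ↑i₀) := by
        intro p hp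
        rw [hy'', Finsupp.support_embDomain, Finset.mem_map] at hp
        obtain ⟨n, -, rfl⟩ := hp
        exact le_refl _
      obtain ⟨Y'', hY''n, -, hΨrow''⟩ := key i₀ y'' hrows''
      have hY''y' : Y'' = y' := by
        ext n
        rw [hY''n n, hy'']
        exact Finsupp.embDomain_apply_self emb y' n
      set y₂ : X →₀ O := y - Ψ y'' with hy₂
      have hy₂Φ : Φ y₂ = 0 := by
        rw [hy₂, map_sub, hyΦ, hΦΨ, sub_zero]
      have hy₂rows : ∀ p ∈ y₂.support, ((↑p.1 : ι) < ↑i₀) := by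
        intro p hp
        have hp' : y₂ p ≠ 0 := Finsupp.mem_support_iff.mp hp
        rcases lt_trichotomy (↑p.1 : ι) (↑i₀ : ι) with h | h | h
        · exact h
        · exfalso
          apply hp'
          have hpi : p.1 = i₀ := Subtype.ext h
          have hpe : p = ((i₀, p.2) : X) := by rw [← hpi]
          rw [hy₂, Finsupp.sub_apply, hpe, hΨrow'' p.2, hY''y', hy', ← hYn p.2, sub_eq_zero]
        · exfalso
          apply hp'
          have h1 : y p = 0 := by
            by_contra hcon
            exact absurd (hrows₀ p (Finsupp.mem_support_iff.mpr hcon)) (not_le.mpr h)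
          have h2 : (Ψ y'') p = 0 := by
            rw [hΨ, lc_coord, Finsupp.sum]
            apply Finset.sum_eq_zero
            intro q hq
            have hq' : (↑q.1 : ι) ≤ ↑i₀ := hrows'' q hq
            rw [hUlt q p (not_le.mpr (lt_of_le_of_lt hq' h)), mul_zero]
          rw [hy₂, Finsupp.sub_apply, h1, h2, sub_zero]
      have hy₂mem : y₂ ∈ LinearMap.range Ψ := by
        by_cases hy₂0 : y₂ = 0
        · rw [hy₂0]; exact Submodule.zero_mem _
        have hne₂ : y₂.support.Nonempty := Finsupp.support_nonempty_iff.mpr hy₂0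
        have hSne₂ : (y₂.support.image Prod.fst).Nonempty := hne₂.image _
        set i₂ : ι' := (y₂.support.image Prod.fst).max' hSne₂ with hi₂
        have hi₂lt : (↑i₂ : ι) < ↑i₀ := by
          obtain ⟨p, hp, hpfst⟩ := Finset.mem_image.mp
            ((y₂.support.image Prod.fst).max'_mem hSne₂)
          rw [← hi₂] at hpfst
          rw [← hpfst]
          exact hy₂rows p hp
        refine IH ↑i₂ (lt_of_lt_of_le hi₂lt hi₀i) y₂ hy₂Φ ?_
        intro p hp
        exact Subtype.coe_le_coe.mpr ((y₂.support.image Prod.fst).le_max'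
          p.1 (Finset.mem_image.mpr ⟨p, hp, rfl⟩))
      have : y = y₂ + Ψ y'' := by rw [hy₂]; abel
      rw [this]
      exact Submodule.add_mem _ hy₂mem ⟨y'', rfl⟩
    intro y hy
    by_cases hy0 : y = 0
    · rw [hy0]; exact Submodule.zero_mem _
    have hne : y.support.Nonempty := Finsupp.support_nonempty_iff.mpr hy0
    have hSne : (y.support.image Prod.fst).Nonempty := hne.image _
    refine main ↑((y.support.image Prod.fst).max' hSne) y hy ?_
    intro p hp
    exact Subtype.coe_le_coe.mpr ((y.support.image Prod.fst).le_max'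
      p.1 (Finset.mem_image.mpr ⟨p, hp, rfl⟩))
  refine ⟨X, Φ, Ψ, le_antisymm hrange_le hKle, hΨinj, ?_⟩
  apply le_antisymm
  · rintro _ ⟨t, rfl⟩
    exact LinearMap.mem_ker.mpr (hΦΨ t)
  · intro y hy
    exact hkerle y (LinearMap.mem_ker.mp hy)

end Auxiliary

/-- A valuation ring in which every ideal is countably generated has global dimension at most 2:
every module admits a projective resolution `0 → P₂ → P₁ → P₀ → M → 0` of length at most 2. -/
theorem globalDimension_le_two_of_countably_generated_ideals
    (O : Type u) [CommRing O] [IsDomain O] [ValuationRing O]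
    (hcount : ∀ I : Ideal O, ∃ S : Set O, S.Countable ∧ Ideal.span S = I)
    (M : Type v) [AddCommGroup M] [Module O M] :
    ∃ (P₂ P₁ P₀ : Type (max u v)) (_ : AddCommGroup P₂) (_ : AddCommGroup P₁)
      (_ : AddCommGroup P₀) (_ : Module O P₂) (_ : Module O P₁) (_ : Module O P₀),
      Module.Projective O P₂ ∧ Module.Projective O P₁ ∧ Module.Projective O P₀ ∧
      ∃ (f₂ : P₂ →ₗ[O] P₁) (f₁ : P₁ →ₗ[O] P₀) (f₀ : P₀ →ₗ[O] M),
        Function.Injective f₂ ∧ Function.Exact f₂ f₁ ∧ Function.Exact f₁ f₀ ∧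
        Function.Surjective f₀ := by
  classical
  obtain ⟨linM, wfM⟩ := exists_wellOrder M
  set f₀ : (M →₀ O) →ₗ[O] M := Finsupp.linearCombination O _root_.id with hf₀
  have hf₀surj : Function.Surjective f₀ := by
    intro m
    exact ⟨Finsupp.single m 1, by simp [hf₀]⟩
  obtain ⟨X, f₁, f₂, hrange, hinj, hker⟩ :=
    free_resolution_of_submodule hcount (LinearMap.ker f₀)
  refine ⟨X →₀ O, X →₀ O, M →₀ O, inferInstance, inferInstance, inferInstance,
    inferInstance, inferInstance, inferInstance, inferInstance, inferInstance, inferInstance,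
    f₂, f₁, f₀, hinj, ?_, ?_, hf₀surj⟩
  · rw [LinearMap.exact_iff]
    exact hker.symm
  · rw [LinearMap.exact_iff]
    exact hrange.symm
end

section
/- Let O be a valuation ring and 𝔭 ⊆ O a prime ideal such that O is Henselian along 𝔭 (the pair (O, 𝔭) is a Henselian pair). Then the localization O_𝔭 is Henselian along its ideal 𝔭O_𝔭. -/
/-!
Since `O` is a valuation ring, every element of the maximal ideal `𝔭O_𝔭` of `O_𝔭` already comes
from `𝔭`. It suffices to find a root in `𝔭O_𝔭` of every `g = a + X + X²r` with `a ∈ 𝔭O_𝔭`.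
Substituting `X ↦ aX` and dividing by `a` gives `k = 1 + X + X²q`, where `q` has coefficients
in `𝔭O_𝔭`; the reversed polynomial `X^(n+2) + X^(n+1) + (reflected q)` lifts to a monic
polynomial over `O` that is `X^(n+1)(X + 1)` modulo `𝔭`. Henselianity of `(O, 𝔭)` yields a root
`z ≡ -1`, and `a / z` is the required root of `g`.
-/

open Polynomial IsLocalRing

theorem PreValuationRing.maximalIdeal_atPrime_subset_image
    {O : Type*} [CommRing O] [PreValuationRing O] (𝔭 : Ideal O) [𝔭.IsPrime] :
    (maximalIdeal (Localization.AtPrime 𝔭) : Set (Localization.AtPrime 𝔭)) ⊆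
      algebraMap O _ '' 𝔭 := by
  intro x hx
  obtain ⟨a, s, rfl⟩ := IsLocalization.exists_mk'_eq 𝔭.primeCompl x
  have ha : a ∈ 𝔭 := (IsLocalization.AtPrime.mk'_mem_maximal_iff _ 𝔭 a s).mp hx
  obtain ⟨c, hc | hc⟩ := PreValuationRing.cond (s : O) a
  · refine ⟨c, (‹𝔭.IsPrime›.mem_or_mem (hc ▸ ha)).resolve_left s.2, ?_⟩
    rw [IsLocalization.eq_mk'_iff_mul_eq, ← map_mul, mul_comm, hc]
  · exact absurd (hc ▸ 𝔭.mul_mem_right c ha) s.2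

theorem HenselianLocalRing.of_forall_exists_isRoot {R : Type*} [CommRing R] [IsLocalRing R]
    (h : ∀ g : R[X], g.coeff 0 ∈ maximalIdeal R → g.coeff 1 = 1 →
      ∃ t ∈ maximalIdeal R, g.IsRoot t) :
    HenselianLocalRing R where
  is_henselian f _ a₀ hfa₀ hf'a₀ := by
    obtain ⟨u, hu⟩ := hf'a₀
    obtain ⟨t, ht, hroot⟩ := h (C (↑u⁻¹ : R) * taylor a₀ f)
      (by rw [coeff_C_mul, taylor_coeff_zero]; exact Ideal.mul_mem_left _ _ hfa₀)
      (by rw [coeff_C_mul, taylor_coeff_one, ← hu, Units.inv_mul])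
    refine ⟨t + a₀, ?_, by simpa using ht⟩
    simpa [IsRoot, taylor_eval] using hroot

theorem Polynomial.exists_map_eq_of_coeff_mem_image {O R : Type*} [CommRing O] [CommRing R]
    (φ : O →+* R) (I : Ideal O) (P : R[X]) (hP : ∀ i, P.coeff i ∈ φ '' I) :
    ∃ Q : O[X], Q.map φ = P ∧ Q.natDegree ≤ P.natDegree ∧ ∀ i, Q.coeff i ∈ I := by
  choose c hcI hc using hP
  refine ⟨∑ i ∈ Finset.range (P.natDegree + 1), C (c i) * X ^ i, ?_, ?_, fun i => ?_⟩
  · simp only [Polynomial.map_sum, Polynomial.map_mul, map_C, Polynomial.map_pow, map_X, hc]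
    exact P.as_sum_range_C_mul_X_pow.symm
  · exact natDegree_sum_le_of_forall_le _ _ fun i hi =>
      (natDegree_C_mul_X_pow_le _ _).trans (Nat.lt_succ_iff.mp (Finset.mem_range.mp hi))
  · simp only [finsetSum_coeff, coeff_C_mul_X_pow, Finset.sum_ite_eq, Finset.mem_range]
    split_ifs
    · exact hcI i
    · exact I.zero_mem

theorem HenselianRing.exists_isRoot_X_pow_add_X_pow_add {O : Type*} [CommRing O] {I : Ideal O}
    [HenselianRing O I] {n : ℕ} {Q : O[X]} (hQ : Q.natDegree ≤ n) (hQI : ∀ i, Q.coeff i ∈ I) :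
    ∃ z, (X ^ (n + 2) + X ^ (n + 1) + Q).IsRoot z ∧ z + 1 ∈ I := by
  have hmonic : (X ^ (n + 2) + X ^ (n + 1) + Q).Monic := by
    rw [add_assoc]
    refine monic_X_pow_add ((degree_add_le _ _).trans_lt (max_lt ?_ ?_))
    · exact (degree_X_pow_le _).trans_lt (by exact_mod_cast Nat.lt_succ_self _)
    · exact (degree_le_of_natDegree_le hQ).trans_lt (by exact_mod_cast (by omega : n < n + 2))
  have hmod : (X ^ (n + 2) + X ^ (n + 1) + Q).map (Ideal.Quotient.mk I) =
      X ^ (n + 2) + X ^ (n + 1) := by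
    have hQ0 : Q.map (Ideal.Quotient.mk I) = 0 := by
      ext i
      simpa [Ideal.Quotient.eq_zero_iff_mem] using hQI i
    simp [hQ0]
  obtain ⟨z, hz, hz1⟩ := HenselianRing.is_henselian _ hmonic (-1)
    (by
      refine (Ideal.Quotient.eq_zero_iff_mem (I := I)).mp ?_
      rw [← eval_map_apply, hmod]
      simp [pow_succ])
    (by
      rw [← eval_map_apply, ← derivative_map, hmod]
      convert (isUnit_one.neg.pow (n + 1) : IsUnit ((-1 : O ⧸ I) ^ (n + 1))) using 1
      simp [pow_succ]
      ring)
  exact ⟨z, hz, by simpa using hz1⟩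

theorem Polynomial.natDegree_one_add_X_add_X_sq_mul_le {R : Type*} [Semiring R] {n : ℕ}
    {q : R[X]} (hq : q.natDegree ≤ n) : (1 + X + X ^ 2 * q).natDegree ≤ n + 2 := by
  refine natDegree_add_le_of_degree_le (natDegree_add_le_of_degree_le ?_ ?_) ?_
  · simp
  · exact natDegree_X_le.trans (by omega)
  · exact (natDegree_mul_le_of_le (natDegree_X_pow_le 2) hq).trans (by omega)

theorem Polynomial.reflect_one_add_X_add_X_sq_mul {R : Type*} [Semiring R] {n : ℕ} {q : R[X]}
    (hq : q.natDegree ≤ n) :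
    reflect (n + 2) (1 + X + X ^ 2 * q) = X ^ (n + 2) + X ^ (n + 1) + reflect n q := by
  have hX : reflect (n + 2) (X : R[X]) = X ^ (n + 1) := by
    simpa [revAt_le] using reflect_monomial (R := R) (n + 2) 1
  have hX2q : reflect (n + 2) (X ^ 2 * q) = reflect n q := by
    rw [add_comm n 2, reflect_mul _ _ (natDegree_X_pow_le 2) hq, reflect_monomial,
      revAt_le le_rfl, Nat.sub_self, pow_zero, one_mul]
  rw [reflect_add, reflect_add, reflect_one, hX, hX2q]

theorem HenselianLocalRing.of_maximalIdeal_subset_image {O R : Type*} [CommRing O] [CommRing R]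
    [IsLocalRing R] {I : Ideal O} [HenselianRing O I] (φ : O →+* R)
    (hφ : (maximalIdeal R : Set R) ⊆ φ '' I) : HenselianLocalRing R := by
  refine of_forall_exists_isRoot fun g hg0 hg1 => ?_
  set a := g.coeff 0
  obtain ⟨r, hr⟩ : X ^ 2 ∣ g - C a - X := X_pow_dvd_iff.mpr fun d hd => by
    interval_cases d <;> simp [a, hg1]
  set q : R[X] := C a * r.comp (C a * X)
  set n := q.natDegree
  have hgk : ∀ s, g.eval (a * s) = a * (1 + X + X ^ 2 * q).eval s := by
    intro s
    have hrs := congrArg (eval (a * s)) hr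
    simp only [eval_sub, eval_C, eval_X, eval_mul, eval_pow] at hrs
    simp only [q, eval_add, eval_one, eval_X, eval_mul, eval_pow, eval_C, eval_comp]
    linear_combination hrs
  obtain ⟨Q, hQφ, hQdeg, hQI⟩ := exists_map_eq_of_coeff_mem_image φ I (reflect n q) fun i =>
    hφ (by rw [coeff_reflect, coeff_C_mul]; exact Ideal.mul_mem_right _ _ hg0)
  obtain ⟨z, hzroot, hz1⟩ := HenselianRing.exists_isRoot_X_pow_add_X_pow_add
    (hQdeg.trans (natDegree_reflect_le.trans (max_le le_rfl le_rfl))) hQI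
  have hzunit : IsUnit z := by
    simpa using (Ideal.mem_jacobson_bot.mp (HenselianRing.jac hz1) (-1)).neg
  obtain ⟨u, hu⟩ := hzunit.map φ
  have hk : (1 + X + X ^ 2 * q).eval (↑u⁻¹ : R) = 0 := by
    rw [← eval₂_id, ← eval₂_reflect_eq_zero_iff _ _ (n + 2) _
      (natDegree_one_add_X_add_X_sq_mul_le le_rfl), reflect_one_add_X_add_X_sq_mul le_rfl,
      ← hQφ, invOf_units, inv_inv, hu, eval₂_id]
    simpa using congrArg φ hzroot
  exact ⟨a * ↑u⁻¹, Ideal.mul_mem_right _ _ hg0, by rw [IsRoot, hgk, hk, mul_zero]⟩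

/-- If a valuation ring `O` is Henselian along a prime ideal `𝔭`, then the localization `O_𝔭`
is Henselian along its ideal `𝔭 O_𝔭`. -/
theorem henselian_localization_of_henselian_valuationRing
    (O : Type*) [CommRing O] [IsDomain O] [ValuationRing O]
    (𝔭 : Ideal O) [𝔭.IsPrime] [HenselianRing O 𝔭] :
    HenselianRing (Localization.AtPrime 𝔭)
      (𝔭.map (algebraMap O (Localization.AtPrime 𝔭))) := by
  have : HenselianLocalRing (Localization.AtPrime 𝔭) :=
    .of_maximalIdeal_subset_image (algebraMap O _)
      (PreValuationRing.maximalIdeal_atPrime_subset_image 𝔭)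
  rw [Localization.AtPrime.map_eq_maximalIdeal]
  infer_instance
end

section
/- Let p be a prime number and let ι : A → B be an injective homomorphism of commutative rings of characteristic p. Let a ∈ A and b ∈ B with b^p = ι(a). Then every polynomial g ∈ A[X] with g(b) = 0 (evaluating coefficients via ι) satisfies g^p ∈ (X^p − a)·A[X]. Consequently, the kernel of the induced ring homomorphism A[X]/(X^p − a) → B sending X to b is a nil ideal (every element of the kernel is nilpotent). -/
/-!
Raising to the `p`-th power is additive in characteristic `p`, so `g ^ p` is the `p`-expansion
`h(X ^ p)` of the polynomial `h` obtained by applying Frobenius to the coefficients of `g`.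
Evaluating, `ι (h(a)) = g(b) ^ p = 0`, so `a` is a root of `h` by injectivity of `ι`; hence
`X - a ∣ h`, and expanding gives `X ^ p - a ∣ h(X ^ p) = g ^ p`. An element of the kernel of
`A[X]/(X ^ p - a) → B` is the class of such a `g`, so its `p`-th power vanishes.
-/

namespace Polynomial

theorem X_pow_sub_C_dvd_expand {R : Type*} [CommRing R] (p : ℕ) {h : R[X]} {a : R}
    (ha : h.IsRoot a) : X ^ p - C a ∣ expand R p h := by
  simpa using _root_.map_dvd (expand R p) (dvd_iff_isRoot.mpr ha)

theorem pow_expChar_eq_expand_map_frobenius {R : Type*} [CommSemiring R] (p : ℕ) [ExpChar R p]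
    (g : R[X]) : g ^ p = expand R p (g.map (frobenius R p)) := by
  rw [← map_expand, map_frobenius_expand]

theorem eval_map_frobenius_of_pow_eq {A B : Type*} [CommSemiring A] [CommSemiring B] (p : ℕ)
    [ExpChar A p] [ExpChar B p] (ι : A →+* B) {a : A} {b : B} (hb : b ^ p = ι a) (g : A[X]) :
    ι ((g.map (frobenius A p)).eval a) = eval₂ ι b g ^ p := by
  rw [← eval₂_at_apply, eval₂_map, ι.frobenius_comm, ← hb, ← frobenius_def, ← hom_eval₂,
    frobenius_def]

theorem pow_expChar_mem_span_X_pow_sub_C {A B : Type*} [CommRing A] [CommSemiring B] (p : ℕ)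
    [ExpChar A p] [ExpChar B p] (ι : A →+* B) (hι : Function.Injective ι) {a : A} {b : B}
    (hb : b ^ p = ι a) {g : A[X]} (hg : eval₂ ι b g = 0) :
    g ^ p ∈ Ideal.span {(X : A[X]) ^ p - C a} := by
  have hroot : (g.map (frobenius A p)).IsRoot a := by
    apply hι
    rw [eval_map_frobenius_of_pow_eq p ι hb, hg, map_zero, zero_pow (expChar_ne_zero B p)]
  rw [Ideal.mem_span_singleton, pow_expChar_eq_expand_map_frobenius p g]
  exact X_pow_sub_C_dvd_expand p hroot

end Polynomial

open Polynomial in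
/-- Let `p` be prime, `ι : A → B` an injective homomorphism of commutative rings of
characteristic `p`, `a ∈ A` and `b ∈ B` with `b^p = ι a`. Then every `g ∈ A[X]` with `g(b) = 0`
satisfies `g^p ∈ (X^p − a)`; consequently, the kernel of the induced ring homomorphism
`A[X]/(X^p − a) → B`, `X ↦ b`, is a nil ideal. -/
theorem pow_p_mem_span_and_ker_nil
    (p : ℕ) [Fact p.Prime] (A B : Type*) [CommRing A] [CommRing B] [CharP A p] [CharP B p]
    (ι : A →+* B) (hι : Function.Injective ι) (a : A) (b : B) (hb : b ^ p = ι a) :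
    (∀ g : A[X], eval₂ ι b g = 0 → g ^ p ∈ Ideal.span {(X : A[X]) ^ p - C a}) ∧
    (∀ x ∈ RingHom.ker
        (Ideal.Quotient.lift (Ideal.span {(X : A[X]) ^ p - C a}) (eval₂RingHom ι b)
          (fun g hg => by
            rw [Ideal.mem_span_singleton] at hg
            obtain ⟨q, rfl⟩ := hg
            simp [hb])),
      IsNilpotent x) := by
  refine ⟨fun g hg => pow_expChar_mem_span_X_pow_sub_C p ι hι hb hg, fun x hx => ?_⟩
  obtain ⟨g, rfl⟩ := Ideal.Quotient.mk_surjective x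
  rw [RingHom.mem_ker, Ideal.Quotient.lift_mk] at hx
  refine ⟨p, ?_⟩
  rw [← map_pow, Ideal.Quotient.eq_zero_iff_mem]
  exact pow_expChar_mem_span_X_pow_sub_C p ι hι hb hx
end
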